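/- Let Σ be the fan in ℚ³ consisting of the three cones σ, ε(σ), ε²(σ) and all of their faces, with σ and ε as above. Then Σ is not quasi-projective: there is no family (l₁, l₂, l₃) of linear forms on ℚ³, indexed by the maximal cones σ₁ = σ, σ₂ = ε(σ), σ₃ = ε²(σ) of Σ, such that lᵢ = lⱼ on σᵢ ∩ σⱼ for all i, j and lᵢ(x) > lⱼ(x) for all i ≠ j and every x ∈ σᵢ with x ∉ σⱼ. -/

import Mathlib

open Pointwise

/-- The cone generated by a finite family of vectors: all nonnegative
rational linear combinations of the `g i`. -/
def coneGen {V : Type*} [AddCommGroup V] [Module ℚ V] {n : ℕ} (g : Fin n → V) : Set V :=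
  {x | ∃ c : Fin n → ℚ, (∀ i, 0 ≤ c i) ∧ x = ∑ i, c i • g i}

/-- A set is a cone if it is the cone generated by some finite family of vectors. -/
def IsCone {V : Type*} [AddCommGroup V] [Module ℚ V] (C : Set V) : Prop :=
  ∃ (n : ℕ) (g : Fin n → V), C = coneGen g

/-- `F` is a face of the cone `C` if `F = C ∩ l⁻¹(0)` for some linear form `l`
nonnegative on `C`. -/
def IsFaceOf {V : Type*} [AddCommGroup V] [Module ℚ V] (F C : Set V) : Prop :=
  ∃ l : V →ₗ[ℚ] ℚ, (∀ x ∈ C, 0 ≤ l x) ∧ F = C ∩ {x | l x = 0}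

/-- A fan: a finite collection of strictly convex cones, closed under taking faces,
such that the intersection of any two of its cones is a face of each. -/
def IsFan {V : Type*} [AddCommGroup V] [Module ℚ V] (S : Set (Set V)) : Prop :=
  S.Finite ∧
  (∀ C ∈ S, IsCone C ∧ C ∩ (-C) = ({0} : Set V)) ∧
  (∀ C ∈ S, ∀ F : Set V, IsFaceOf F C → F ∈ S) ∧
  (∀ C ∈ S, ∀ C' ∈ S, IsFaceOf (C ∩ C') C ∧ IsFaceOf (C ∩ C') C')

/-- A cone of the collection `S` is maximal if it is not strictly contained in
another cone of `S`. -/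
def IsMaximalIn {V : Type*} [AddCommGroup V] [Module ℚ V] (S : Set (Set V)) (C : Set V) : Prop :=
  C ∈ S ∧ ∀ C' ∈ S, C ⊆ C' → C' = C

/-- A fan is quasi-projective if there is a family of linear forms indexed by its
maximal cones which agree on pairwise intersections and satisfy the strict
inequality condition. -/
def IsQuasiProjectiveFan {V : Type*} [AddCommGroup V] [Module ℚ V] (S : Set (Set V)) : Prop :=
  ∃ l : Set V → (V →ₗ[ℚ] ℚ),
    (∀ C, IsMaximalIn S C → ∀ C', IsMaximalIn S C' → ∀ x ∈ C ∩ C', l C x = l C' x) ∧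
    (∀ C, IsMaximalIn S C → ∀ C', IsMaximalIn S C' → C ≠ C' →
      ∀ x ∈ C, x ∉ C' → l C' x < l C x)

/-- The generators `5u+v−5w`, `−5u−5v+14w`, `4u−v` of the cone `σ`. -/
def genS : Fin 3 → (Fin 3 → ℚ) := ![![5, 1, -5], ![-5, -5, 14], ![4, -1, 0]]

/-- The cone `σ = Cone(5u+v−5w, −5u−5v+14w, 4u−v)` in `ℚ³`. -/
def coneSigma : Set (Fin 3 → ℚ) := coneGen genS

/-- The matrix of `ε` in the standard basis `(u, v, w)`:
`ε(u) = v`, `ε(v) = −u−v`, `ε(w) = w`. -/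
def epsMat : Matrix (Fin 3) (Fin 3) ℚ := ![![0, -1, 0], ![1, -1, 0], ![0, 0, 1]]

/-- The linear automorphism `ε : ℚ³ → ℚ³`. -/
def eps : (Fin 3 → ℚ) →ₗ[ℚ] (Fin 3 → ℚ) := Matrix.toLin' epsMat

/-- The fan `Σ` consisting of `σ`, `ε(σ)`, `ε²(σ)` and all of their faces. -/
def fanSigma : Set (Set (Fin 3 → ℚ)) :=
  {coneSigma, ⇑eps '' coneSigma, ⇑eps '' (⇑eps '' coneSigma)} ∪
    {C | IsFaceOf C coneSigma ∨ IsFaceOf C (⇑eps '' coneSigma) ∨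
      IsFaceOf C (⇑eps '' (⇑eps '' coneSigma))}

/-- The three maximal cones `σ₁ = σ`, `σ₂ = ε(σ)`, `σ₃ = ε²(σ)` of `Σ`. -/
def threeCones : Fin 3 → Set (Fin 3 → ℚ) :=
  ![coneSigma, ⇑eps '' coneSigma, ⇑eps '' (⇑eps '' coneSigma)]

/-
`ε` has order 3 and permutes `σ₁ → σ₂ → σ₃ → σ₁`, so a family `(lᵢ)` with the strict inequality
condition can be rotated to two more such families. With `g₀ = 5u+v−5w` and `g₁ = −5u−5v+14w`
(generators of `σ₁` with `g₀, g₁ ∉ σ₂` and `g₁ ∉ σ₃`), the quantity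
`5 (l₁ − l₂)(g₀) + 4 (l₁ − l₃)(g₁) + (l₁ − l₂)(g₁)` is positive for each of the three families,
but the relation `5 g₀ + 5 g₁ = 5 ε²g₀ + 4 εg₁ + ε²g₁` makes the three values sum to zero.
-/

def IsStrictlyConvexSupport {ι V : Type*} [AddCommGroup V] [Module ℚ V] (σ : ι → Set V)
    (L : ι → V →ₗ[ℚ] ℚ) : Prop :=
  ∀ i j, i ≠ j → ∀ x ∈ σ i, x ∉ σ j → L j x < L i x

theorem mem_coneGen_self {V : Type*} [AddCommGroup V] [Module ℚ V] {n : ℕ} (g : Fin n → V)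
    (i : Fin n) : g i ∈ coneGen g :=
  ⟨Pi.single i 1, fun j => by by_cases h : j = i <;> simp [h],
    by simp [Pi.single_apply]⟩

theorem IsFaceOf.subset {V : Type*} [AddCommGroup V] [Module ℚ V] {F C : Set V}
    (h : IsFaceOf F C) : F ⊆ C := by
  obtain ⟨l, -, rfl⟩ := h
  exact Set.inter_subset_left

section Rotation

variable {V : Type*} [AddCommGroup V] [Module ℚ V] {T : V →ₗ[ℚ] V} {σ : Fin 3 → Set V}

theorem apply_mem_succ_iff_of_rotation (hT : ∀ x, T (T (T x)) = x)
    (hσ : ∀ i, σ (i + 1) = T '' σ i) (i : Fin 3) (x : V) : T x ∈ σ (i + 1) ↔ x ∈ σ i := by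
  rw [hσ]
  exact (Function.LeftInverse.injective (g := fun y => T (T y)) hT).mem_set_image

theorem mem_succ_iff_of_rotation (hT : ∀ x, T (T (T x)) = x) (hσ : ∀ i, σ (i + 1) = T '' σ i)
    (i : Fin 3) (x : V) : x ∈ σ (i + 1) ↔ T (T x) ∈ σ i := by
  rw [← apply_mem_succ_iff_of_rotation hT hσ i (T (T x)), hT]

theorem IsStrictlyConvexSupport.rotate (hT : ∀ x, T (T (T x)) = x)
    (hσ : ∀ i, σ (i + 1) = T '' σ i) {L : Fin 3 → V →ₗ[ℚ] ℚ}
    (hL : IsStrictlyConvexSupport σ L) :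
    IsStrictlyConvexSupport σ (fun i => L (i + 1) ∘ₗ T) := fun i j hij x hx hnx =>
  hL (i + 1) (j + 1) (by simpa using hij) (T x) ((apply_mem_succ_iff_of_rotation hT hσ i x).2 hx)
    (mt (apply_mem_succ_iff_of_rotation hT hσ j x).1 hnx)

theorem exists_mem_notMem_of_rotation (hT : ∀ x, T (T (T x)) = x)
    (hσ : ∀ i, σ (i + 1) = T '' σ i) {a b : V} (ha : a ∈ σ 0) (hb : b ∈ σ 0) (ha₁ : a ∉ σ 1)
    (hb₂ : b ∉ σ 2) {i j : Fin 3} (hij : i ≠ j) : ∃ x ∈ σ i, x ∉ σ j := by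
  have m := apply_mem_succ_iff_of_rotation hT hσ
  have hTa : T a ∈ σ 1 := (m 0 a).2 ha
  have hTb : T b ∈ σ 1 := (m 0 b).2 hb
  have hTa₂ : T a ∉ σ 2 := mt (m 1 a).1 ha₁
  have hTb₀ : T b ∉ σ 0 := mt (m 2 b).1 hb₂
  fin_cases i <;> fin_cases j
  all_goals first
    | exact absurd rfl hij
    | exact ⟨a, ha, ha₁⟩
    | exact ⟨b, hb, hb₂⟩
    | exact ⟨T a, hTa, hTa₂⟩
    | exact ⟨T b, hTb, hTb₀⟩
    | exact ⟨T (T a), (m 1 _).2 hTa, mt (m 2 _).1 hTa₂⟩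
    | exact ⟨T (T b), (m 1 _).2 hTb, mt (m 0 _).1 hTb₀⟩

theorem not_exists_isStrictlyConvexSupport_of_rotation (hT : ∀ x, T (T (T x)) = x)
    (hσ : ∀ i, σ (i + 1) = T '' σ i) {a b : V} (ha : a ∈ σ 0) (hb : b ∈ σ 0) (ha₁ : a ∉ σ 1)
    (hb₁ : b ∉ σ 1) (hb₂ : b ∉ σ 2) {p q r : ℚ} (hp : 0 < p) (hq : 0 < q) (hr : 0 < r)
    (hrel : p • a + (q + r) • b = p • T (T a) + q • T b + r • T (T b)) :
    ¬ ∃ L, IsStrictlyConvexSupport σ L := by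
  rintro ⟨L, hL⟩
  have gap_pos : ∀ L, IsStrictlyConvexSupport σ L →
      0 < p * (L 0 a - L 1 a) + q * (L 0 b - L 2 b) + r * (L 0 b - L 1 b) := by
    intro L hL
    have h₁ := hL 0 1 (by decide) a ha ha₁
    have h₂ := hL 0 2 (by decide) b hb hb₂
    have h₃ := hL 0 1 (by decide) b hb hb₁
    have := mul_pos hp (sub_pos.2 h₁)
    have := mul_pos hq (sub_pos.2 h₂)
    have := mul_pos hr (sub_pos.2 h₃)
    linarith
  have hL' := hL.rotate hT hσ
  have g₀ := gap_pos L hL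
  have g₁ := gap_pos _ hL'
  have g₂ := gap_pos _ (hL'.rotate hT hσ)
  simp only [LinearMap.comp_apply, Fin.reduceAdd] at g₁ g₂
  -- The three gaps sum to zero: the terms involving `L i` add up to `L i` applied to `Tⁱ hrel`.
  have r₀ := congrArg (L 0) hrel
  have r₁ := congrArg (L 1 ∘ₗ T) hrel
  have r₂ := congrArg (L 2 ∘ₗ T ∘ₗ T) hrel
  simp only [LinearMap.comp_apply, map_add, map_smul, smul_eq_mul, hT] at r₀ r₁ r₂
  linarith

end Rotation

theorem eps_apply (x : Fin 3 → ℚ) : eps x = ![-x 1, x 0 - x 1, x 2] := by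
  rw [eps, Matrix.toLin'_apply]
  ext i
  fin_cases i <;> simp [epsMat, Matrix.mulVec, dotProduct, Fin.sum_univ_three]
  ring

theorem eps_eps_eps (x : Fin 3 → ℚ) : eps (eps (eps x)) = x := by
  ext i
  fin_cases i <;> simp [eps_apply]
  ring

theorem threeCones_succ (i : Fin 3) : threeCones (i + 1) = ⇑eps '' threeCones i := by
  fin_cases i
  · rfl
  · rfl
  · simp [threeCones, Set.image_image, eps_eps_eps]

-- Facet normals: `(5, 20, 9)` vanishes on `genS 0, genS 2` and `(11, 45, 20)` on `genS 0, genS 1`.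
theorem facets_nonneg_of_mem_coneSigma {x : Fin 3 → ℚ} (hx : x ∈ coneSigma) :
    0 ≤ 5 * x 0 + 20 * x 1 + 9 * x 2 ∧ 0 ≤ -(11 * x 0 + 45 * x 1 + 20 * x 2) := by
  obtain ⟨c, hc, rfl⟩ := hx
  have := hc 0; have := hc 1; have := hc 2
  simp [genS, Fin.sum_univ_three]
  constructor <;> linarith

theorem notMem_threeCones_succ {x : Fin 3 → ℚ} {i : Fin 3}
    (h : eps (eps x) ∉ threeCones i) : x ∉ threeCones (i + 1) :=
  mt (mem_succ_iff_of_rotation eps_eps_eps threeCones_succ i x).1 h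

theorem genS_zero_notMem_threeCones_one : genS 0 ∉ threeCones 1 :=
  notMem_threeCones_succ (i := 0) fun h => by
    have := facets_nonneg_of_mem_coneSigma h
    norm_num [eps_apply, genS, Matrix.cons_val_two] at this

theorem genS_one_notMem_threeCones_one : genS 1 ∉ threeCones 1 :=
  notMem_threeCones_succ (i := 0) fun h => by
    have := facets_nonneg_of_mem_coneSigma h
    norm_num [eps_apply, genS, Matrix.cons_val_two] at this

theorem genS_one_notMem_threeCones_two : genS 1 ∉ threeCones 2 :=
  notMem_threeCones_succ (i := 1) <| notMem_threeCones_succ (i := 0) fun h => by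
    have := facets_nonneg_of_mem_coneSigma h
    norm_num [eps_apply, eps_eps_eps, genS, Matrix.cons_val_two] at this

theorem genS_relation :
    (5 : ℚ) • genS 0 + ((4 : ℚ) + 1) • genS 1 =
      (5 : ℚ) • eps (eps (genS 0)) + (4 : ℚ) • eps (genS 1) + (1 : ℚ) • eps (eps (genS 1)) := by
  ext i
  fin_cases i <;> norm_num [eps_apply, genS, Matrix.cons_val_two]

theorem threeCones_mem_fanSigma (i : Fin 3) : threeCones i ∈ fanSigma := by
  left
  fin_cases i <;> simp [threeCones]

theorem exists_subset_threeCones_of_mem_fanSigma {C : Set (Fin 3 → ℚ)} (hC : C ∈ fanSigma) :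
    ∃ j, C ⊆ threeCones j := by
  rcases hC with (rfl | rfl | rfl) | (h | h | h)
  exacts [⟨0, subset_rfl⟩, ⟨1, subset_rfl⟩, ⟨2, subset_rfl⟩, ⟨0, h.subset⟩, ⟨1, h.subset⟩,
    ⟨2, h.subset⟩]

theorem eq_of_threeCones_subset {i j : Fin 3} (h : threeCones i ⊆ threeCones j) : i = j := by
  by_contra hij
  obtain ⟨x, hx, hnx⟩ := exists_mem_notMem_of_rotation eps_eps_eps threeCones_succ
    (mem_coneGen_self genS 0) (mem_coneGen_self genS 1) genS_zero_notMem_threeCones_one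
    genS_one_notMem_threeCones_two hij
  exact hnx (h hx)

theorem isMaximalIn_threeCones (i : Fin 3) : IsMaximalIn fanSigma (threeCones i) := by
  refine ⟨threeCones_mem_fanSigma i, fun C hC hiC => ?_⟩
  obtain ⟨j, hCj⟩ := exists_subset_threeCones_of_mem_fanSigma hC
  obtain rfl := eq_of_threeCones_subset (hiC.trans hCj)
  exact hCj.antisymm hiC

/-- The fan `Σ` is not quasi-projective: there is no family
`(l₁, l₂, l₃)` of linear forms on `ℚ³`, indexed by the maximal cones
`σ₁ = σ`, `σ₂ = ε(σ)`, `σ₃ = ε²(σ)`, with `lᵢ = lⱼ` on `σᵢ ∩ σⱼ` for all `i, j`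
and `lᵢ(x) > lⱼ(x)` for all `i ≠ j` and every `x ∈ σᵢ` with `x ∉ σⱼ`. -/
theorem fanSigma_not_quasiProjective :
    ¬ IsQuasiProjectiveFan fanSigma ∧
    ¬ ∃ l : Fin 3 → ((Fin 3 → ℚ) →ₗ[ℚ] ℚ),
        (∀ i j : Fin 3, ∀ x ∈ threeCones i ∩ threeCones j, l i x = l j x) ∧
        (∀ i j : Fin 3, i ≠ j → ∀ x ∈ threeCones i, x ∉ threeCones j →
          l j x < l i x) := by
  have hnone : ¬ ∃ L, IsStrictlyConvexSupport threeCones L :=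
    not_exists_isStrictlyConvexSupport_of_rotation eps_eps_eps threeCones_succ
      (mem_coneGen_self genS 0) (mem_coneGen_self genS 1) genS_zero_notMem_threeCones_one
      genS_one_notMem_threeCones_one genS_one_notMem_threeCones_two
      (by norm_num) (by norm_num) (by norm_num) genS_relation
  constructor
  · rintro ⟨l, -, hl⟩
    refine hnone ⟨fun i => l (threeCones i), fun i j hij => ?_⟩
    exact hl _ (isMaximalIn_threeCones i) _ (isMaximalIn_threeCones j)
      fun h => hij (eq_of_threeCones_subset h.subset)
  · rintro ⟨l, -, hl⟩
    exact hnone ⟨l, hl⟩
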